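/- arXiv:math/0406399 — 7 statements merged into one kernel-verified Lean document; each statement's English description precedes it below -/
import Mathlib

section
/- For every integer m ≥ 1, every γ ∈ (0, π/2), and every point p ∈ W_γ, there exists a closed 2m-bounce billiard path based at p if and only if γ < π/(2m). -/
open Real

noncomputable section

/-- The Euclidean plane. -/
abbrev E2 := EuclideanSpace ℝ (Fin 2)

/-- Construct a point of the plane from its coordinates. -/
def pt (x y : ℝ) : E2 := WithLp.toLp 2 ![x, y]

/-- The open wedge of opening angle `γ`, bounded by the horizontal line `{y = 0}`
and the line `{y = x·tan γ}`. -/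
def wedge (γ : ℝ) : Set E2 := {p | 0 < p 0 ∧ 0 < p 1 ∧ p 1 < p 0 * Real.tan γ}

/-- A direction vector of the boundary line: the horizontal line if `horiz`, the
line `{y = x·tan γ}` otherwise. -/
def lineDir (γ : ℝ) (horiz : Bool) : E2 :=
  if horiz then pt 1 0 else pt (Real.cos γ) (Real.sin γ)

/-- Membership of the corresponding boundary line. -/
def onBoundary (γ : ℝ) (horiz : Bool) (p : E2) : Prop :=
  if horiz then p 1 = 0 else p 1 = p 0 * Real.tan γ

/-- The linear reflection of `ℝ²` across the `1`-dimensional subspace spanned by `d`,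
applied to `v` (for `d ≠ 0`). -/
def reflDir (d v : E2) : E2 :=
  (2 * (inner ℝ v d : ℝ) / (inner ℝ d d : ℝ)) • d - v

/-- A closed `n`-bounce billiard path based at the point `p` of the wedge `W_γ`:
a sequence `q 0 = p, q 1, …, q n, q (n+1) = p` with consecutive points distinct,
whose intermediate points lie alternately on the two boundary lines (minus the
vertex), whose open segments lie in the open wedge, and which satisfies the law
of reflection at each bounce. -/
structure ClosedBounce (γ : ℝ) (p : E2) (n : ℕ) where
  q : ℕ → E2
  /-- `horiz k` records whether the `k`-th bounce is on the horizontal line `ℓ₀`. -/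
  horiz : ℕ → Bool
  alt : ∀ k, 1 ≤ k → k < n → horiz (k + 1) = !horiz k
  start : q 0 = p
  closes : q (n + 1) = p
  distinct : ∀ k ≤ n, q k ≠ q (k + 1)
  bounce_ne_vertex : ∀ k, 1 ≤ k → k ≤ n → q k ≠ 0
  onLine : ∀ k, 1 ≤ k → k ≤ n → onBoundary γ (horiz k) (q k)
  segs_in_wedge : ∀ k ≤ n, ∀ t : ℝ, 0 < t → t < 1 →
    (1 - t) • q k + t • q (k + 1) ∈ wedge γ
  reflects : ∀ k, 1 ≤ k → k ≤ n →
    (‖q (k + 1) - q k‖)⁻¹ • (q (k + 1) - q k) =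
      reflDir (lineDir γ (horiz k)) ((‖q k - q (k - 1)‖)⁻¹ • (q k - q (k - 1)))

/-- The total length of a closed `n`-bounce billiard path. -/
def totalLength {γ : ℝ} {p : E2} {n : ℕ} (P : ClosedBounce γ p n) : ℝ :=
  ∑ k ∈ Finset.range (n + 1), ‖P.q (k + 1) - P.q k‖

/-!
Unfold a billiard path by reflecting the wedge in the wall hit at each bounce: the path becomes a
straight segment. When the first bounce is on `ℓ₀`, bounce `k` unfolds onto the ray at angle
`-(k-1)γ` and the return to `p = ρ e^{iβ}` after `n = 2m` bounces unfolds to `ρ e^{i(β - nγ)}`.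
As seen from the origin, the points of a segment starting at `p` stay on one side of the line
through `0` and `p`, so the swept angle `nγ` is less than `π`. If the first bounce is on `ℓ_γ`,
reflect everything in the bisector of the wedge first. Conversely, if `nγ < π`, the chord from
`ρ e^{iβ}` to `ρ e^{i(β - nγ)}` crosses the rays at angles `0, -γ, …, -(n-1)γ` in this order, and
folding it back into the wedge gives the path.
-/

open Complex (I)
open scoped Complex ComplexConjugate

def toComplex : E2 ≃ₗᵢ[ℝ] ℂ := Complex.orthonormalBasisOneI.repr.symm

@[simp] lemma toComplex_re (v : E2) : (toComplex v).re = v 0 := by simp [toComplex]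

@[simp] lemma toComplex_im (v : E2) : (toComplex v).im = v 1 := by simp [toComplex]

lemma im_exp_mul_ofReal_mul_exp (θ R a : ℝ) :
    (cexp (θ * I) * (R * cexp (a * I))).im = R * sin (θ + a) := by
  rw [mul_left_comm, ← Complex.exp_add, ← add_mul, ← Complex.ofReal_add,
    Complex.im_ofReal_mul, Complex.exp_ofReal_mul_I_im]

/-- The reflection of `ℂ` in the line through `0` at angle `θ`. -/
def lineReflection (θ : ℝ) : ℂ ≃ₗᵢ[ℝ] ℂ :=
  Complex.conjLIE.trans (rotation (Circle.exp (2 * θ)))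

lemma lineReflection_apply (θ : ℝ) (z : ℂ) :
    lineReflection θ z = cexp ((2 * θ : ℝ) * I) * conj z := rfl

lemma lineReflection_ofReal_mul_exp (θ R a : ℝ) :
    lineReflection θ (R * cexp (a * I)) = R * cexp ((2 * θ - a : ℝ) * I) := by
  rw [lineReflection_apply, map_mul, Complex.conj_ofReal, ← Complex.exp_conj, mul_left_comm,
    ← Complex.exp_add]
  congr 2
  simp only [map_mul, Complex.conj_ofReal, Complex.conj_I]
  push_cast
  ring

lemma lineReflection_ofReal_mul_exp_self (θ R : ℝ) :
    lineReflection θ (R * cexp (θ * I)) = R * cexp (θ * I) := by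
  rw [lineReflection_ofReal_mul_exp]
  ring_nf

lemma lineReflection_lineReflection (a b : ℝ) (z : ℂ) :
    lineReflection a (lineReflection b z) = cexp ((2 * (a - b) : ℝ) * I) * z := by
  rw [lineReflection_apply, lineReflection_apply, map_mul, Complex.conj_conj, ← Complex.exp_conj,
    ← mul_assoc, ← Complex.exp_add]
  congr 2
  simp only [map_mul, Complex.conj_ofReal, Complex.conj_I]
  push_cast
  ring

lemma lineReflection_involutive (θ : ℝ) : Function.Involutive (lineReflection θ) := fun z => by
  rw [lineReflection_lineReflection, sub_self, mul_zero, Complex.ofReal_zero, zero_mul,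
    Complex.exp_zero, one_mul]

lemma im_exp_mul_lineReflection (φ θ : ℝ) (z : ℂ) :
    (cexp (φ * I) * lineReflection θ z).im = -(cexp ((-(φ + 2 * θ) : ℝ) * I) * z).im := by
  rw [← Complex.conj_im, map_mul, ← Complex.exp_conj, lineReflection_apply, ← mul_assoc,
    ← Complex.exp_add]
  congr 4
  simp only [map_mul, Complex.conj_ofReal, Complex.conj_I]
  push_cast
  ring

/-- The open sector between the rays at angles `θ₁ < θ₂`, when `θ₂ - θ₁ < π`. -/
def sector (θ₁ θ₂ : ℝ) : Set ℂ :=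
  {z | 0 < (cexp ((-θ₁ : ℝ) * I) * z).im ∧ (cexp ((-θ₂ : ℝ) * I) * z).im < 0}

lemma lineReflection_mem_sector {θ θ₁ θ₂ : ℝ} {z : ℂ} (hz : z ∈ sector θ₁ θ₂) :
    lineReflection θ z ∈ sector (2 * θ - θ₂) (2 * θ - θ₁) := by
  constructor
  · rw [im_exp_mul_lineReflection, neg_pos]
    convert hz.2 using 5
    push_cast
    ring
  · rw [im_exp_mul_lineReflection, neg_neg_iff_pos]
    convert hz.1 using 5
    push_cast
    ring

lemma rotation_mem_sector {φ θ₁ θ₂ : ℝ} {z : ℂ} :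
    rotation (Circle.exp φ) z ∈ sector (θ₁ + φ) (θ₂ + φ) ↔ z ∈ sector θ₁ θ₂ := by
  simp only [sector, Set.mem_ofPred_eq, rotation_apply, Circle.coe_exp, ← mul_assoc,
    ← Complex.exp_add, ← add_mul, ← Complex.ofReal_add, neg_add, neg_add_cancel_right]

lemma smul_add_smul_mem_sector {θ₁ θ₂ a a' R R' t : ℝ} (hR : 0 < R) (hR' : 0 < R')
    (h₁ : θ₁ ≤ a') (ha : a' < a) (h₂ : a ≤ θ₂) (hπ : θ₂ - θ₁ < π) (ht0 : 0 < t) (ht1 : t < 1) :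
    (1 - t) • ((R : ℂ) * cexp (a * I)) + t • ((R' : ℂ) * cexp (a' * I)) ∈ sector θ₁ θ₂ := by
  have him (θ : ℝ) : (cexp (θ * I) * ((1 - t) • ((R : ℂ) * cexp (a * I)) +
      t • ((R' : ℂ) * cexp (a' * I)))).im =
        (1 - t) * (R * sin (θ + a)) + t * (R' * sin (θ + a')) := by
    rw [mul_add, mul_smul_comm, mul_smul_comm, Complex.add_im, Complex.smul_im, Complex.smul_im,
      im_exp_mul_ofReal_mul_exp, im_exp_mul_ofReal_mul_exp, smul_eq_mul, smul_eq_mul]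
  constructor
  · rw [him]
    have hs := sin_pos_of_pos_of_lt_pi (by linarith : 0 < -θ₁ + a) (by linarith)
    have hs' := sin_nonneg_of_nonneg_of_le_pi (by linarith : 0 ≤ -θ₁ + a') (by linarith)
    have := mul_pos (sub_pos.2 ht1) (mul_pos hR hs)
    have := mul_nonneg ht0.le (mul_nonneg hR'.le hs')
    linarith
  · rw [him]
    have hs := sin_nonpos_of_nonpos_of_neg_pi_le (by linarith : -θ₂ + a ≤ 0) (by linarith)
    have hs' := sin_neg_of_neg_of_neg_pi_lt (by linarith : -θ₂ + a' < 0) (by linarith)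
    have := mul_nonpos_of_nonneg_of_nonpos (sub_pos.2 ht1).le (mul_nonpos_of_nonneg_of_nonpos hR.le hs)
    have := mul_neg_of_pos_of_neg ht0 (mul_neg_of_pos_of_neg hR' hs')
    linarith

/-- Points of a ray from `ρ e^{iβ}` lie on one side of the line through `0` and `ρ e^{iβ}`. -/
lemma sin_pos_iff_of_add_smul_eq {ρ β T R x : ℝ} {u : ℂ} (hT : 0 < T) (hR : 0 < R)
    (h : (ρ : ℂ) * cexp (β * I) + T • u = R * cexp ((β - x : ℝ) * I)) :
    0 < sin x ↔ (cexp ((-β : ℝ) * I) * u).im < 0 := by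
  have him := congrArg (fun z => (cexp ((-β : ℝ) * I) * z).im) h
  simp only [mul_add, mul_smul_comm, Complex.add_im, Complex.smul_im, im_exp_mul_ofReal_mul_exp,
    neg_add_cancel, sin_zero, mul_zero, zero_add, smul_eq_mul] at him
  rw [show -β + (β - x) = -x by ring, sin_neg] at him
  constructor <;> intro hs <;> nlinarith

lemma pos_and_lt_pi_of_sin_pos {y : ℝ} (h1 : -π < y) (h2 : y < 2 * π) (hs : 0 < sin y) :
    0 < y ∧ y < π := by
  constructor
  · by_contra! h
    linarith [sin_nonpos_of_nonpos_of_neg_pi_le h h1.le]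
  · by_contra! h
    have := sin_nonneg_of_nonneg_of_le_pi (x := y - π) (by linarith) (by linarith)
    rw [sin_sub_pi] at this
    linarith

lemma lt_pi_of_forall_sin_pos {x : ℕ → ℝ} {N : ℕ} (h0 : x 0 = 0)
    (hstep : ∀ k < N, |x (k + 1) - x k| < π) (hsin : ∀ k, 0 < k → k ≤ N → 0 < sin (x k)) :
    x N < π := by
  suffices ∀ k ≤ N, 0 ≤ x k ∧ x k < π from (this N le_rfl).2
  intro k hk
  induction k with
  | zero => simp [h0, pi_pos]
  | succ k ih =>
    obtain ⟨h1, h2⟩ := ih (by omega)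
    have := abs_lt.1 (hstep k (by omega))
    have := pos_and_lt_pi_of_sin_pos (by linarith) (by linarith) (hsin (k + 1) (by omega) hk)
    exact ⟨this.1.le, this.2⟩

def lineAngle (γ : ℝ) (b : Bool) : ℝ := if b then 0 else γ

lemma lineAngle_not (γ : ℝ) (b : Bool) : lineAngle γ (!b) = γ - lineAngle γ b := by
  cases b <;> simp [lineAngle]

lemma toComplex_lineDir (γ : ℝ) (b : Bool) :
    toComplex (lineDir γ b) = cexp (lineAngle γ b * I) := by
  cases b <;> apply Complex.ext <;>
    simp [lineDir, lineAngle, pt, Complex.exp_ofReal_mul_I_re, Complex.exp_ofReal_mul_I_im]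

lemma toComplex_reflDir {d : E2} {θ : ℝ} (hd : toComplex d = cexp (θ * I)) (v : E2) :
    toComplex (reflDir d v) = lineReflection θ (toComplex v) := by
  have hθ : cexp (θ * I) * conj (cexp (θ * I)) = 1 := by
    rw [Complex.mul_conj, Complex.normSq_eq_norm_sq, Complex.norm_exp_ofReal_mul_I]
    norm_num
  have hdd : inner ℝ d d = 1 := by
    rw [← toComplex.inner_map_map, hd, Complex.inner, hθ, Complex.one_re]
  have hvd : (inner ℝ v d : ℂ) = (toComplex d * conj (toComplex v) +
      conj (toComplex d * conj (toComplex v))) / 2 := by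
    rw [← toComplex.inner_map_map, Complex.inner, Complex.re_eq_add_conj]
  have h2θ : cexp (2 * θ * I) = cexp (θ * I) * cexp (θ * I) := by
    rw [← Complex.exp_add]
    ring_nf
  rw [reflDir, hdd, div_one, map_sub, map_smul, hd, Complex.real_smul, Complex.ofReal_mul, hvd,
    lineReflection_apply, hd, map_mul, Complex.conj_conj]
  push_cast
  rw [h2θ]
  linear_combination (toComplex v) * hθ

lemma onBoundary_iff {γ : ℝ} (hγ : cos γ ≠ 0) (b : Bool) (v : E2) :
    onBoundary γ b v ↔ ∃ r : ℝ, toComplex v = r * cexp (lineAngle γ b * I) := by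
  cases b
  · simp only [onBoundary, lineAngle, Bool.false_eq_true, if_false, Complex.ext_iff,
      Complex.re_ofReal_mul, Complex.im_ofReal_mul, Complex.exp_ofReal_mul_I_re,
      Complex.exp_ofReal_mul_I_im, toComplex_re, toComplex_im, tan_eq_sin_div_cos]
    constructor
    · intro h
      exact ⟨v 0 / cos γ, by field_simp, by rw [h]; field_simp⟩
    · rintro ⟨r, h0, h1⟩
      rw [h0, h1]
      field_simp
  · simp only [onBoundary, lineAngle, if_true, Complex.ext_iff, Complex.ofReal_zero, zero_mul,
      Complex.exp_zero, mul_one, Complex.ofReal_re, Complex.ofReal_im, toComplex_re,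
      toComplex_im]
    exact ⟨fun h => ⟨v 0, rfl, h⟩, fun ⟨r, _, h⟩ => h⟩

lemma mem_wedge_iff {γ : ℝ} (hγ0 : 0 < γ) (hγ1 : γ < π / 2) (v : E2) :
    v ∈ wedge γ ↔ toComplex v ∈ sector 0 γ := by
  have hc : 0 < cos γ := cos_pos_of_mem_Ioo ⟨by linarith [pi_pos], hγ1⟩
  have hs : 0 < sin γ := sin_pos_of_pos_of_lt_pi hγ0 (by linarith [pi_pos])
  have him : (cexp ((-γ : ℝ) * I) * toComplex v).im = cos γ * v 1 - sin γ * v 0 := by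
    rw [Complex.mul_im, Complex.exp_ofReal_mul_I_re, Complex.exp_ofReal_mul_I_im, cos_neg,
      sin_neg, toComplex_re, toComplex_im]
    ring
  simp only [wedge, sector, Set.mem_ofPred_eq, neg_zero, Complex.ofReal_zero, zero_mul,
    Complex.exp_zero, one_mul, toComplex_im, him, tan_eq_sin_div_cos, mul_div_assoc',
    lt_div_iff₀ hc]
  constructor
  · rintro ⟨_, h1, h2⟩
    exact ⟨h1, by linarith⟩
  · rintro ⟨h1, h2⟩
    refine ⟨?_, h1, by linarith⟩
    by_contra! h0
    nlinarith [mul_pos hc h1, mul_nonpos_of_nonneg_of_nonpos hs.le h0]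

lemma exists_polar_of_mem_wedge {γ : ℝ} (hγ0 : 0 < γ) (hγ1 : γ < π / 2) {p : E2}
    (hp : p ∈ wedge γ) :
    ∃ ρ β : ℝ, 0 < ρ ∧ 0 < β ∧ β < γ ∧ toComplex p = ρ * cexp (β * I) := by
  rw [mem_wedge_iff hγ0 hγ1] at hp
  have hz : toComplex p ≠ 0 := by
    rintro h
    simp [h, sector] at hp
  obtain ⟨h1, h2⟩ := hp
  rw [← Complex.norm_mul_exp_arg_mul_I (toComplex p), im_exp_mul_ofReal_mul_exp] at h1 h2
  have hρ : 0 < ‖toComplex p‖ := norm_pos_iff.2 hz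
  refine ⟨‖toComplex p‖, (toComplex p).arg, hρ, ?_, ?_,
    (Complex.norm_mul_exp_arg_mul_I _).symm⟩
  · by_contra! h
    have := sin_nonpos_of_nonpos_of_neg_pi_le (by linarith : -0 + (toComplex p).arg ≤ 0)
      (by linarith [Complex.neg_pi_lt_arg (toComplex p)])
    nlinarith
  · by_contra! h
    have := sin_nonneg_of_nonneg_of_le_pi (by linarith : 0 ≤ -γ + (toComplex p).arg)
      (by linarith [Complex.arg_le_pi (toComplex p)])
    nlinarith

lemma left_mem_closure_of_forall_mem {s : Set E2} {a b : E2}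
    (h : ∀ t : ℝ, 0 < t → t < 1 → (1 - t) • a + t • b ∈ s) : a ∈ closure s := by
  refine closure_mono ?_ (segment_subset_closure_openSegment (left_mem_segment ℝ a b))
  rw [openSegment_eq_image]
  rintro _ ⟨t, ⟨ht0, ht1⟩, rfl⟩
  exact h t ht0 ht1

lemma closure_wedge_subset (γ : ℝ) : closure (wedge γ) ⊆ {v | 0 ≤ v 0} :=
  closure_minimal (fun _ hv => hv.1.le) (isClosed_le continuous_const (by fun_prop))

def bisectorReflection (γ : ℝ) : E2 ≃ₗᵢ[ℝ] E2 :=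
  toComplex.trans ((lineReflection (γ / 2)).trans toComplex.symm)

lemma toComplex_bisectorReflection (γ : ℝ) (v : E2) :
    toComplex (bisectorReflection γ v) = lineReflection (γ / 2) (toComplex v) := by
  simp [bisectorReflection]

lemma bisectorReflection_mem_wedge {γ : ℝ} (hγ0 : 0 < γ) (hγ1 : γ < π / 2) {v : E2}
    (hv : v ∈ wedge γ) : bisectorReflection γ v ∈ wedge γ := by
  rw [mem_wedge_iff hγ0 hγ1] at hv ⊢
  have := lineReflection_mem_sector (θ := γ / 2) hv
  rwa [show 2 * (γ / 2) - γ = 0 by ring, show 2 * (γ / 2) - 0 = γ by ring,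
    ← toComplex_bisectorReflection] at this

lemma bisectorReflection_onBoundary {γ : ℝ} (hγ : cos γ ≠ 0) {b : Bool} {v : E2}
    (hv : onBoundary γ b v) : onBoundary γ (!b) (bisectorReflection γ v) := by
  obtain ⟨r, hr⟩ := (onBoundary_iff hγ b v).1 hv
  refine (onBoundary_iff hγ _ _).2 ⟨r, ?_⟩
  rw [toComplex_bisectorReflection, hr, lineReflection_ofReal_mul_exp, lineAngle_not]
  ring_nf

lemma bisectorReflection_reflDir (γ : ℝ) (b : Bool) (v : E2) :
    bisectorReflection γ (reflDir (lineDir γ b) v) =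
      reflDir (lineDir γ (!b)) (bisectorReflection γ v) := by
  apply toComplex.injective
  rw [toComplex_bisectorReflection, toComplex_reflDir (toComplex_lineDir γ b),
    toComplex_reflDir (toComplex_lineDir γ !b), toComplex_bisectorReflection,
    lineReflection_lineReflection, lineReflection_lineReflection, lineAngle_not]
  ring_nf

/-- The isometry unfolding segment `k` of a path whose odd bounces are on `ℓ₀`: the composite of
the reflections in the walls of bounces `1, …, k`. -/
def unfolding (γ : ℝ) (k : ℕ) : ℂ ≃ₗᵢ[ℝ] ℂ :=
  if k.bodd then (lineReflection 0).trans (rotation (Circle.exp (-((k - 1) * γ))))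
  else rotation (Circle.exp (-(k * γ)))

section Unfolding

variable {γ : ℝ}

lemma unfolding_of_bodd_false {k : ℕ} (hk : k.bodd = false) (z : ℂ) :
    unfolding γ k z = cexp ((-(k * γ) : ℝ) * I) * z := by
  simp only [unfolding, hk, Bool.false_eq_true, if_false, rotation_apply, Circle.coe_exp]

lemma unfolding_of_bodd_true {k : ℕ} (hk : k.bodd = true) (z : ℂ) :
    unfolding γ k z = cexp ((-((k - 1) * γ) : ℝ) * I) * lineReflection 0 z := by
  simp only [unfolding, hk, if_true, LinearIsometryEquiv.trans_apply, rotation_apply,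
    Circle.coe_exp]

@[simp] lemma unfolding_zero_apply (z : ℂ) : unfolding γ 0 z = z := by
  simp [unfolding_of_bodd_false (k := 0) rfl]

lemma unfolding_succ_apply (k : ℕ) (z : ℂ) :
    unfolding γ (k + 1) z = unfolding γ k (lineReflection (lineAngle γ (k + 1).bodd) z) := by
  cases hk : k.bodd
  · have hk1 : (k + 1).bodd = true := by simp [hk]
    rw [unfolding_of_bodd_true hk1, unfolding_of_bodd_false hk, hk1, lineAngle, if_pos rfl]
    push_cast
    ring_nf
  · have hk1 : (k + 1).bodd = false := by simp [hk]
    rw [unfolding_of_bodd_false hk1, unfolding_of_bodd_true hk, hk1, lineAngle, if_neg (by simp),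
      lineReflection_lineReflection, ← mul_assoc, ← Complex.exp_add]
    push_cast
    ring_nf

lemma unfolding_succ_apply_eq_iff (k : ℕ) (v v' : ℂ) :
    unfolding γ (k + 1) v = unfolding γ k v' ↔
      v = lineReflection (lineAngle γ (k + 1).bodd) v' := by
  rw [unfolding_succ_apply, (unfolding γ k).injective.eq_iff]
  exact (lineReflection_involutive _).eq_iff

lemma unfolding_ofReal_mul_exp_lineAngle (k : ℕ) (R : ℝ) :
    unfolding γ k (R * cexp (lineAngle γ (k + 1).bodd * I)) =
      R * cexp ((-(k * γ) : ℝ) * I) := by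
  cases hk : k.bodd
  · rw [unfolding_of_bodd_false hk, show (k + 1).bodd = true by simp [hk], lineAngle, if_pos rfl,
      Complex.ofReal_zero, zero_mul, Complex.exp_zero, mul_one, mul_comm]
  · rw [unfolding_of_bodd_true hk, show (k + 1).bodd = false by simp [hk], lineAngle,
      if_neg (by simp), lineReflection_ofReal_mul_exp, mul_left_comm, ← Complex.exp_add]
    push_cast
    ring_nf

lemma mem_sector_of_unfolding_mem {k : ℕ} {z : ℂ}
    (h : unfolding γ k z ∈ sector (-(k * γ)) (-((k - 1) * γ))) : z ∈ sector 0 γ := by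
  cases hk : k.bodd
  · simp only [unfolding, hk, Bool.false_eq_true, if_false] at h
    refine (rotation_mem_sector (φ := -(k * γ))).1 ?_
    convert h using 2 <;> ring
  · simp only [unfolding, hk, if_true, LinearIsometryEquiv.trans_apply] at h
    have h' := lineReflection_mem_sector (θ := 0)
      ((rotation_mem_sector (φ := -((k - 1) * γ)) (θ₁ := -γ) (θ₂ := 0)).1
        (by convert h using 2 <;> ring))
    rwa [lineReflection_involutive, mul_zero, zero_sub, sub_neg_eq_add, zero_add,
      neg_zero] at h'

end Unfolding

/-- The angle, measured clockwise from `p = ρ e^{iβ}`, at which the origin sees the `k`-th point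
of the unfolded path: `p` itself, the bounces on the rays at angles `0, -γ, …, -(n-1)γ`, and the
image `ρ e^{i(β - nγ)}` of the returning point. -/
def sweepAngle (γ β : ℝ) (n k : ℕ) : ℝ :=
  if k = 0 then 0 else if k ≤ n then β + (k - 1) * γ else n * γ

section SweepAngle

variable {γ β : ℝ} {n : ℕ}

@[simp] lemma sweepAngle_zero : sweepAngle γ β n 0 = 0 := by simp [sweepAngle]

lemma sweepAngle_of_pos_of_le {k : ℕ} (hk0 : 0 < k) (hkn : k ≤ n) :
    sweepAngle γ β n k = β + (k - 1) * γ := by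
  simp [sweepAngle, hk0.ne', hkn]

@[simp] lemma sweepAngle_succ_self : sweepAngle γ β n (n + 1) = n * γ := by simp [sweepAngle]

lemma sweepAngle_one (hn : 0 < n) : sweepAngle γ β n 1 = β := by
  simp [sweepAngle_of_pos_of_le one_pos hn]

lemma sweepAngle_bounds (hβ0 : 0 < β) (hβγ : β < γ) (hn : 0 < n) {k : ℕ} (hk : k ≤ n) :
    (k - 1) * γ + β ≤ sweepAngle γ β n k ∧ sweepAngle γ β n k < sweepAngle γ β n (k + 1) ∧
      sweepAngle γ β n (k + 1) ≤ k * γ + β := by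
  rcases Nat.eq_zero_or_pos k with rfl | hk0
  · simp only [sweepAngle_zero, sweepAngle_one hn, CharP.cast_eq_zero]
    refine ⟨?_, ?_, ?_⟩ <;> linarith
  rcases hk.lt_or_eq with hkn | rfl
  · rw [sweepAngle_of_pos_of_le hk0 hk, sweepAngle_of_pos_of_le (by omega) hkn]
    push_cast
    refine ⟨?_, ?_, ?_⟩ <;> linarith
  · rw [sweepAngle_of_pos_of_le hk0 hk, sweepAngle_succ_self]
    refine ⟨?_, ?_, ?_⟩ <;> linarith

lemma sweepAngle_mem_Icc (hβ0 : 0 < β) (hβγ : β < γ) (k : ℕ) :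
    sweepAngle γ β n k ∈ Set.Icc 0 (n * γ) := by
  have hγ : 0 ≤ γ := by linarith
  unfold sweepAngle
  split_ifs with hk0 hkn
  · exact ⟨le_rfl, by positivity⟩
  · have hk1 : (1 : ℝ) ≤ k := by exact_mod_cast Nat.one_le_iff_ne_zero.2 hk0
    have hkn' : (k : ℝ) ≤ n := by exact_mod_cast hkn
    constructor <;> nlinarith
  · exact ⟨by positivity, le_rfl⟩

end SweepAngle

namespace ClosedBounce

variable {γ : ℝ} {p : E2} {n : ℕ} (P : ClosedBounce γ p n)

def dir (k : ℕ) : ℂ := toComplex (‖P.q (k + 1) - P.q k‖⁻¹ • (P.q (k + 1) - P.q k))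

/-- Bounce `k + 1` is unfolded by the isometry of the segment ending there. -/
def unfolded : ℕ → ℂ
  | 0 => toComplex p
  | k + 1 => unfolding γ k (toComplex (P.q (k + 1)))

lemma dir_eq_lineReflection {k : ℕ} (h1 : 1 ≤ k) (h2 : k ≤ n) :
    P.dir k = lineReflection (lineAngle γ (P.horiz k)) (P.dir (k - 1)) := by
  rw [dir, P.reflects k h1 h2, toComplex_reflDir (toComplex_lineDir γ _), dir,
    Nat.sub_add_cancel h1]

lemma horiz_eq_bodd (h1 : P.horiz 1 = true) {k : ℕ} (hk1 : 1 ≤ k) (hkn : k ≤ n) :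
    P.horiz k = k.bodd := by
  induction k with
  | zero => omega
  | succ k ih =>
    rcases Nat.eq_zero_or_pos k with rfl | hk
    · simpa using h1
    · rw [P.alt k hk (by omega), ih hk (by omega), Nat.bodd_succ]

lemma exists_toComplex_q_eq (hγ0 : 0 < γ) (hγ1 : γ < π / 2) {k : ℕ} (h1 : 1 ≤ k) (h2 : k ≤ n) :
    ∃ r : ℝ, 0 < r ∧ toComplex (P.q k) = r * cexp (lineAngle γ (P.horiz k) * I) := by
  have hc : 0 < cos γ := cos_pos_of_mem_Ioo ⟨by linarith [pi_pos], hγ1⟩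
  obtain ⟨r, hr⟩ := (onBoundary_iff hc.ne' _ _).1 (P.onLine k h1 h2)
  have hre : 0 ≤ r * cos (lineAngle γ (P.horiz k)) := by
    have := closure_wedge_subset γ (left_mem_closure_of_forall_mem (P.segs_in_wedge k h2))
    rwa [Set.mem_ofPred_eq, ← toComplex_re, hr, Complex.re_ofReal_mul,
      Complex.exp_ofReal_mul_I_re] at this
  have hcos : 0 < cos (lineAngle γ (P.horiz k)) := by
    cases P.horiz k <;> simp [lineAngle, hc]
  have hr0 : r ≠ 0 := by
    rintro rfl
    exact P.bounce_ne_vertex k h1 h2 (toComplex.injective (by simpa using hr))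
  exact ⟨r, lt_of_le_of_ne (nonneg_of_mul_nonneg_left hre hcos) hr0.symm, hr⟩

lemma unfolding_dir (hb : ∀ k, 1 ≤ k → k ≤ n → P.horiz k = k.bodd) {k : ℕ} (hk : k ≤ n) :
    unfolding γ k (P.dir k) = P.dir 0 := by
  induction k with
  | zero => exact unfolding_zero_apply _
  | succ k ih =>
    rw [(unfolding_succ_apply_eq_iff k _ _).2 (by
      rw [P.dir_eq_lineReflection (by omega) hk, hb (k + 1) (by omega) hk, Nat.add_sub_cancel]),
      ih (by omega)]

lemma unfolding_toComplex_q_succ (hγ0 : 0 < γ) (hγ1 : γ < π / 2)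
    (hb : ∀ k, 1 ≤ k → k ≤ n → P.horiz k = k.bodd) {k : ℕ} (hk : k + 1 ≤ n) :
    unfolding γ (k + 1) (toComplex (P.q (k + 1))) = P.unfolded (k + 1) := by
  obtain ⟨r, -, hr⟩ := P.exists_toComplex_q_eq hγ0 hγ1 (by omega) hk
  rw [unfolding_succ_apply, ← hb (k + 1) (by omega) hk, hr, lineReflection_ofReal_mul_exp_self,
    ← hr, unfolded]

lemma unfolded_succ_sub (hγ0 : 0 < γ) (hγ1 : γ < π / 2)
    (hb : ∀ k, 1 ≤ k → k ≤ n → P.horiz k = k.bodd) {k : ℕ} (hk : k ≤ n) :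
    P.unfolded (k + 1) - P.unfolded k = ‖P.q (k + 1) - P.q k‖ • P.dir 0 := by
  have hk' : P.unfolded k = unfolding γ k (toComplex (P.q k)) := by
    cases k with
    | zero => simp [unfolded, P.start]
    | succ k => exact (P.unfolding_toComplex_q_succ hγ0 hγ1 hb hk).symm
  have hne : ‖P.q (k + 1) - P.q k‖ ≠ 0 :=
    norm_ne_zero_iff.2 (sub_ne_zero.2 (P.distinct k hk).symm)
  rw [hk', unfolded, ← map_sub, ← map_sub, ← P.unfolding_dir hb hk, dir, map_smul, map_smul,
    smul_inv_smul₀ hne]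

lemma exists_unfolded_eq_add_smul (hγ0 : 0 < γ) (hγ1 : γ < π / 2)
    (hb : ∀ k, 1 ≤ k → k ≤ n → P.horiz k = k.bodd) {k : ℕ} (hk0 : 0 < k) (hk : k ≤ n + 1) :
    ∃ T : ℝ, 0 < T ∧ P.unfolded k = toComplex p + T • P.dir 0 := by
  induction k with
  | zero => omega
  | succ k ih =>
    have hL : 0 < ‖P.q (k + 1) - P.q k‖ :=
      norm_pos_iff.2 (sub_ne_zero.2 (P.distinct k (by omega)).symm)
    rw [← sub_add_cancel (P.unfolded (k + 1)) (P.unfolded k),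
      P.unfolded_succ_sub hγ0 hγ1 hb (by omega)]
    rcases Nat.eq_zero_or_pos k with rfl | hk0'
    · exact ⟨_, hL, by rw [unfolded, add_comm]⟩
    · obtain ⟨T, hT, hTk⟩ := ih hk0' (by omega)
      exact ⟨‖P.q (k + 1) - P.q k‖ + T, by positivity, by rw [hTk, add_smul]; abel⟩

lemma exists_unfolded_eq_polar (hγ0 : 0 < γ) (hγ1 : γ < π / 2)
    (hb : ∀ k, 1 ≤ k → k ≤ n → P.horiz k = k.bodd) (hn : n.bodd = false) {ρ β : ℝ}
    (hρ : 0 < ρ) (hp : toComplex p = ρ * cexp (β * I)) {k : ℕ} (hk : k ≤ n + 1) :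
    ∃ R : ℝ, 0 < R ∧ P.unfolded k = R * cexp ((β - sweepAngle γ β n k : ℝ) * I) := by
  rcases Nat.eq_zero_or_pos k with rfl | hk0
  · exact ⟨ρ, hρ, by simp [unfolded, hp]⟩
  obtain ⟨j, rfl⟩ := Nat.exists_eq_add_of_lt hk0
  rw [zero_add] at hk ⊢
  rcases hk.lt_or_eq with hjn | hjn
  · obtain ⟨r, hr, hrq⟩ := P.exists_toComplex_q_eq hγ0 hγ1 (k := j + 1) (by omega) (by omega)
    refine ⟨r, hr, ?_⟩
    rw [unfolded, hrq, hb (j + 1) (by omega) (by omega), unfolding_ofReal_mul_exp_lineAngle,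
      sweepAngle_of_pos_of_le (by omega) (by omega)]
    push_cast
    ring_nf
  · obtain rfl : j = n := by omega
    refine ⟨ρ, hρ, ?_⟩
    rw [unfolded, P.closes, hp, unfolding_of_bodd_false hn, sweepAngle_succ_self, mul_left_comm,
      ← Complex.exp_add]
    push_cast
    ring_nf

lemma mul_lt_pi_of_horiz_one (hγ0 : 0 < γ) (hγ1 : γ < π / 2) (hp : p ∈ wedge γ) (hn0 : 0 < n)
    (hn : n.bodd = false) (h1 : P.horiz 1 = true) : n * γ < π := by
  obtain ⟨ρ, β, hρ, hβ0, hβγ, hpρ⟩ := exists_polar_of_mem_wedge hγ0 hγ1 hp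
  have hb := fun k => P.horiz_eq_bodd h1 (k := k)
  have hsin_iff : ∀ k, 0 < k → k ≤ n + 1 →
      (0 < sin (sweepAngle γ β n k) ↔ (cexp ((-β : ℝ) * I) * P.dir 0).im < 0) := by
    intro k hk0 hk
    obtain ⟨T, hT, hTk⟩ := P.exists_unfolded_eq_add_smul hγ0 hγ1 hb hk0 hk
    obtain ⟨R, hR, hRk⟩ := P.exists_unfolded_eq_polar hγ0 hγ1 hb hn hρ hpρ hk
    exact sin_pos_iff_of_add_smul_eq hT hR (hpρ ▸ hTk ▸ hRk)
  have hdir := (hsin_iff 1 one_pos (by omega)).1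
    (by rw [sweepAngle_one hn0]; exact sin_pos_of_pos_of_lt_pi hβ0 (by linarith))
  have hstep : ∀ k < n + 1, |sweepAngle γ β n (k + 1) - sweepAngle γ β n k| < π := by
    intro k hk
    obtain ⟨hlo, hlt, hhi⟩ := sweepAngle_bounds hβ0 hβγ hn0 (Nat.le_of_lt_succ hk)
    rw [abs_of_pos (sub_pos.2 hlt)]
    linarith
  simpa using lt_pi_of_forall_sin_pos sweepAngle_zero hstep
    fun k hk0 hk => (hsin_iff k hk0 hk).2 hdir

def swap (hγ0 : 0 < γ) (hγ1 : γ < π / 2) : ClosedBounce γ (bisectorReflection γ p) n where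
  q k := bisectorReflection γ (P.q k)
  horiz k := !P.horiz k
  alt k h1 h2 := by rw [P.alt k h1 h2]
  start := by rw [P.start]
  closes := by rw [P.closes]
  distinct k hk := (bisectorReflection γ).injective.ne (P.distinct k hk)
  bounce_ne_vertex k h1 h2 := by
    rw [Ne, LinearIsometryEquiv.map_eq_zero_iff]
    exact P.bounce_ne_vertex k h1 h2
  onLine k h1 h2 :=
    bisectorReflection_onBoundary (cos_pos_of_mem_Ioo ⟨by linarith [pi_pos], hγ1⟩).ne'
      (P.onLine k h1 h2)
  segs_in_wedge k hk t ht0 ht1 := by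
    rw [← map_smul, ← map_smul, ← map_add]
    exact bisectorReflection_mem_wedge hγ0 hγ1 (P.segs_in_wedge k hk t ht0 ht1)
  reflects k h1 h2 := by
    simp only [← map_sub, LinearIsometryEquiv.norm_map, ← map_smul, P.reflects k h1 h2,
      bisectorReflection_reflDir]

end ClosedBounce

theorem ClosedBounce.mul_lt_pi {γ : ℝ} {p : E2} {n : ℕ} (P : ClosedBounce γ p n) (hγ0 : 0 < γ)
    (hγ1 : γ < π / 2) (hp : p ∈ wedge γ) (hn0 : 0 < n) (hn : n.bodd = false) : n * γ < π := by
  cases h : P.horiz 1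
  · exact (P.swap hγ0 hγ1).mul_lt_pi_of_horiz_one hγ0 hγ1
      (bisectorReflection_mem_wedge hγ0 hγ1 hp) hn0 hn (by simp [swap, h])
  · exact P.mul_lt_pi_of_horiz_one hγ0 hγ1 hp hn0 hn h

/-- The chord from `ρ e^{iβ}` to `ρ e^{i(β - φ)}` meets the ray at angle `β - x` at the parameter
`chordParam φ x` and the radius `chordRadius ρ φ x` (see `chord_eq`). -/
def chordParam (φ x : ℝ) : ℝ := sin x / (sin x + sin (φ - x))

def chordRadius (ρ φ x : ℝ) : ℝ := ρ * sin φ / (sin x + sin (φ - x))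

section Chord

variable {φ : ℝ}

lemma sin_add_sin_sub_pos (hφ0 : 0 < φ) (hφπ : φ < π) {x : ℝ} (hx : x ∈ Set.Icc 0 φ) :
    0 < sin x + sin (φ - x) := by
  obtain ⟨hx0, hxφ⟩ := hx
  rcases hx0.eq_or_lt with rfl | hx0
  · simpa using sin_pos_of_pos_of_lt_pi hφ0 hφπ
  · have := sin_pos_of_pos_of_lt_pi hx0 (by linarith)
    have := sin_nonneg_of_nonneg_of_le_pi (sub_nonneg.2 hxφ) (by linarith)
    linarith

lemma ofReal_mul_exp_sub_ne_zero {ρ β : ℝ} (hρ : ρ ≠ 0) (hφ : sin φ ≠ 0) :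
    (ρ : ℂ) * cexp ((β - φ : ℝ) * I) - ρ * cexp (β * I) ≠ 0 := by
  intro h
  have him := congrArg (fun z => (cexp ((-β : ℝ) * I) * z).im) h
  simp only [mul_sub, Complex.sub_im, im_exp_mul_ofReal_mul_exp, mul_zero, Complex.zero_im,
    neg_add_cancel, sin_zero, sub_zero] at him
  rw [show -β + (β - φ) = -φ by ring, sin_neg, mul_neg, neg_eq_zero] at him
  exact mul_ne_zero hρ hφ him

lemma chordRadius_zero (ρ : ℝ) (hφ : sin φ ≠ 0) : chordRadius ρ φ 0 = ρ := by
  simp [chordRadius, hφ]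

lemma chordRadius_self (ρ : ℝ) (hφ : sin φ ≠ 0) : chordRadius ρ φ φ = ρ := by
  simp [chordRadius, hφ]

lemma chordRadius_pos {ρ : ℝ} (hρ : 0 < ρ) (hφ0 : 0 < φ) (hφπ : φ < π) {x : ℝ}
    (hx : x ∈ Set.Icc 0 φ) : 0 < chordRadius ρ φ x :=
  div_pos (mul_pos hρ (sin_pos_of_pos_of_lt_pi hφ0 hφπ)) (sin_add_sin_sub_pos hφ0 hφπ hx)

lemma chordParam_lt_chordParam (hφ0 : 0 < φ) (hφπ : φ < π) {x y : ℝ} (hx : 0 ≤ x)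
    (hxy : x < y) (hy : y ≤ φ) : chordParam φ x < chordParam φ y := by
  rw [chordParam, chordParam, div_lt_div_iff₀ (sin_add_sin_sub_pos hφ0 hφπ ⟨hx, by linarith⟩)
    (sin_add_sin_sub_pos hφ0 hφπ ⟨by linarith, hy⟩)]
  have key : sin y * sin (φ - x) - sin x * sin (φ - y) = sin φ * sin (y - x) := by
    simp only [sin_sub]
    ring
  nlinarith [mul_pos (sin_pos_of_pos_of_lt_pi hφ0 hφπ)
    (sin_pos_of_pos_of_lt_pi (sub_pos.2 hxy) (by linarith))]

lemma chord_eq (ρ β : ℝ) {x : ℝ} (hx : sin x + sin (φ - x) ≠ 0) :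
    (ρ : ℂ) * cexp (β * I) +
        chordParam φ x • ((ρ : ℂ) * cexp ((β - φ : ℝ) * I) - ρ * cexp (β * I)) =
      chordRadius ρ φ x * cexp ((β - x : ℝ) * I) := by
  have hD := mul_inv_cancel₀ hx
  rw [sin_sub] at hD
  apply Complex.ext
  · simp only [Complex.add_re, Complex.smul_re, Complex.sub_re, Complex.re_ofReal_mul,
      Complex.exp_ofReal_mul_I_re, chordParam, chordRadius, smul_eq_mul, cos_sub, sin_sub,
      div_eq_mul_inv]
    linear_combination (-ρ * cos β) * hD
  · simp only [Complex.add_im, Complex.smul_im, Complex.sub_im, Complex.im_ofReal_mul,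
      Complex.exp_ofReal_mul_I_im, chordParam, chordRadius, smul_eq_mul, sin_sub,
      div_eq_mul_inv]
    linear_combination (-ρ * sin β) * hD

end Chord

def unfoldedChord (γ ρ β : ℝ) (n k : ℕ) : ℂ :=
  chordRadius ρ (n * γ) (sweepAngle γ β n k) * cexp ((β - sweepAngle γ β n k : ℝ) * I)

def foldedChord (γ ρ β : ℝ) (n : ℕ) : ℕ → ℂ
  | 0 => ρ * cexp (β * I)
  | k + 1 => (unfolding γ k).symm (unfoldedChord γ ρ β n (k + 1))

section FoldedChord

variable {γ ρ β : ℝ} {n : ℕ}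

lemma unfoldedChord_succ_sub (hβ0 : 0 < β) (hβγ : β < γ) (hn0 : 0 < n) (hnγ : n * γ < π)
    {k : ℕ} (hk : k ≤ n) :
    ∃ c : ℝ, 0 < c ∧ unfoldedChord γ ρ β n (k + 1) - unfoldedChord γ ρ β n k =
      c • ((ρ : ℂ) * cexp ((β - n * γ : ℝ) * I) - ρ * cexp (β * I)) := by
  have hφ : 0 < (n : ℝ) * γ := by have := hβ0.trans hβγ; positivity
  have hden (j : ℕ) : sin (sweepAngle γ β n j) + sin (n * γ - sweepAngle γ β n j) ≠ 0 :=
    (sin_add_sin_sub_pos hφ hnγ (sweepAngle_mem_Icc hβ0 hβγ j)).ne'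
  obtain ⟨-, hlt, -⟩ := sweepAngle_bounds hβ0 hβγ hn0 hk
  refine ⟨_, sub_pos.2 (chordParam_lt_chordParam hφ hnγ (sweepAngle_mem_Icc hβ0 hβγ k).1 hlt
    (sweepAngle_mem_Icc hβ0 hβγ (k + 1)).2), ?_⟩
  rw [unfoldedChord, unfoldedChord, ← chord_eq ρ β (hden _), ← chord_eq ρ β (hden _), sub_smul]
  abel

lemma foldedChord_eq_bounce {j : ℕ} (hj : j + 1 ≤ n) :
    foldedChord γ ρ β n (j + 1) = chordRadius ρ (n * γ) (sweepAngle γ β n (j + 1)) *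
      cexp (lineAngle γ (j + 1).bodd * I) := by
  rw [foldedChord, LinearIsometryEquiv.symm_apply_eq, unfolding_ofReal_mul_exp_lineAngle,
    unfoldedChord, sweepAngle_of_pos_of_le (by omega) hj]
  push_cast
  ring_nf

lemma unfolding_foldedChord_succ (k : ℕ) :
    unfolding γ k (foldedChord γ ρ β n (k + 1)) = unfoldedChord γ ρ β n (k + 1) := by
  rw [foldedChord, LinearIsometryEquiv.apply_symm_apply]

lemma unfolding_foldedChord (hnγ : sin (n * γ) ≠ 0) {k : ℕ} (hk : k ≤ n) :
    unfolding γ k (foldedChord γ ρ β n k) = unfoldedChord γ ρ β n k := by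
  cases k with
  | zero => simp [foldedChord, unfoldedChord, chordRadius_zero ρ hnγ]
  | succ j =>
    rw [unfolding_succ_apply, foldedChord_eq_bounce hk, lineReflection_ofReal_mul_exp_self,
      ← foldedChord_eq_bounce hk, unfolding_foldedChord_succ]

lemma foldedChord_succ_self (hn : n.bodd = false) (hnγ : sin (n * γ) ≠ 0) :
    foldedChord γ ρ β n (n + 1) = ρ * cexp (β * I) := by
  rw [foldedChord, LinearIsometryEquiv.symm_apply_eq, unfolding_of_bodd_false hn, unfoldedChord,
    sweepAngle_succ_self, chordRadius_self ρ hnγ, mul_left_comm, ← Complex.exp_add]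
  push_cast
  ring_nf

lemma unfolding_dir_foldedChord (hβ0 : 0 < β) (hβγ : β < γ) (hn0 : 0 < n) (hnγ : n * γ < π)
    {k : ℕ} (hk : k ≤ n) :
    unfolding γ k (‖foldedChord γ ρ β n (k + 1) - foldedChord γ ρ β n k‖⁻¹ •
        (foldedChord γ ρ β n (k + 1) - foldedChord γ ρ β n k)) =
      ‖(ρ : ℂ) * cexp ((β - n * γ : ℝ) * I) - ρ * cexp (β * I)‖⁻¹ •
        ((ρ : ℂ) * cexp ((β - n * γ : ℝ) * I) - ρ * cexp (β * I)) := by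
  have hφ : 0 < (n : ℝ) * γ := by have := hβ0.trans hβγ; positivity
  obtain ⟨c, hc, hZ⟩ := unfoldedChord_succ_sub (ρ := ρ) hβ0 hβγ hn0 hnγ hk
  rw [← (unfolding γ k).norm_map, map_smul, map_sub, unfolding_foldedChord
    (sin_pos_of_pos_of_lt_pi hφ hnγ).ne' hk, unfolding_foldedChord_succ, hZ,
    norm_smul, Real.norm_of_nonneg hc.le, smul_smul, mul_inv, mul_right_comm,
    inv_mul_cancel₀ hc.ne', one_mul]

end FoldedChord

def ClosedBounce.ofChord {γ : ℝ} {p : E2} {n : ℕ} (ρ β : ℝ) (hγ0 : 0 < γ) (hγ1 : γ < π / 2)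
    (hρ : 0 < ρ) (hβ0 : 0 < β) (hβγ : β < γ) (hn0 : 0 < n) (hn : n.bodd = false)
    (hnγ : n * γ < π) (hp : toComplex p = ρ * cexp (β * I)) : ClosedBounce γ p n :=
  have hφ : 0 < (n : ℝ) * γ := by have := hβ0.trans hβγ; positivity
  have hsin : sin (n * γ) ≠ 0 := (sin_pos_of_pos_of_lt_pi hφ hnγ).ne'
  have hR (k : ℕ) : 0 < chordRadius ρ (n * γ) (sweepAngle γ β n k) :=
    chordRadius_pos hρ hφ hnγ (sweepAngle_mem_Icc hβ0 hβγ k)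
  { q := fun k => toComplex.symm (foldedChord γ ρ β n k)
    horiz := Nat.bodd
    alt := fun k _ _ => Nat.bodd_succ k
    start := toComplex.symm_apply_eq.2 hp.symm
    closes := toComplex.symm_apply_eq.2 (by rw [foldedChord_succ_self hn hsin, hp])
    distinct := fun k hk h => by
      obtain ⟨c, hc, hZ⟩ := unfoldedChord_succ_sub (ρ := ρ) hβ0 hβγ hn0 hnγ hk
      have := congrArg (unfolding γ k ∘ toComplex) h
      simp only [Function.comp_apply, LinearIsometryEquiv.apply_symm_apply,
        unfolding_foldedChord hsin hk, unfolding_foldedChord_succ] at this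
      exact smul_ne_zero hc.ne' (ofReal_mul_exp_sub_ne_zero hρ.ne' hsin)
        (hZ ▸ sub_eq_zero.2 this.symm)
    bounce_ne_vertex := fun k h1 h2 h => by
      obtain ⟨j, rfl⟩ := Nat.exists_eq_add_of_le' h1
      have := congrArg (‖toComplex ·‖) h
      simp only [LinearIsometryEquiv.apply_symm_apply, foldedChord_eq_bounce h2, norm_mul,
        Complex.norm_real, Complex.norm_exp_ofReal_mul_I, map_zero, norm_zero, mul_one,
        Real.norm_of_nonneg (hR _).le] at this
      exact (hR _).ne' this
    onLine := fun k h1 h2 => by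
      obtain ⟨j, rfl⟩ := Nat.exists_eq_add_of_le' h1
      refine (onBoundary_iff (cos_pos_of_mem_Ioo ⟨by linarith [pi_pos], hγ1⟩).ne' (j + 1).bodd
        _).2 ⟨chordRadius ρ (n * γ) (sweepAngle γ β n (j + 1)), ?_⟩
      rw [LinearIsometryEquiv.apply_symm_apply, foldedChord_eq_bounce h2]
    segs_in_wedge := fun k hk t ht0 ht1 => by
      obtain ⟨hlo, hlt, hhi⟩ := sweepAngle_bounds hβ0 hβγ hn0 hk
      rw [mem_wedge_iff hγ0 hγ1]
      apply mem_sector_of_unfolding_mem (k := k)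
      simp only [map_add, map_smul, LinearIsometryEquiv.apply_symm_apply,
        unfolding_foldedChord hsin hk, unfolding_foldedChord_succ]
      exact smul_add_smul_mem_sector (hR _) (hR _) (by linarith) (by linarith) (by linarith)
        (by linarith) ht0 ht1
    reflects := fun k h1 h2 => by
      obtain ⟨j, rfl⟩ := Nat.exists_eq_add_of_le' h1
      apply toComplex.injective
      simp only [← map_sub, LinearIsometryEquiv.norm_map]
      rw [toComplex_reflDir (toComplex_lineDir γ _), LinearIsometryEquiv.map_smul,
        LinearIsometryEquiv.map_smul, LinearIsometryEquiv.apply_symm_apply,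
        LinearIsometryEquiv.apply_symm_apply, Nat.add_sub_cancel, ← unfolding_succ_apply_eq_iff,
        unfolding_dir_foldedChord hβ0 hβγ hn0 hnγ h2,
        unfolding_dir_foldedChord hβ0 hβγ hn0 hnγ (by omega)] }

/-- For every integer `m ≥ 1`, every `γ ∈ (0, π/2)` and every point `p` of the wedge
`W_γ`, there exists a closed `2m`-bounce billiard path based at `p` if and only if
`γ < π/(2m)`. -/
theorem exists_closed_even_bounce_iff (m : ℕ) (hm : 1 ≤ m) (γ : ℝ)
    (hγ0 : 0 < γ) (hγ1 : γ < π / 2) (p : E2) (hp : p ∈ wedge γ) :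
    Nonempty (ClosedBounce γ p (2 * m)) ↔ γ < π / (2 * m) := by
  have hn0 : 0 < 2 * m := by omega
  have hn : (2 * m).bodd = false := by simp [Nat.bodd_mul]
  have hcast : ((2 * m : ℕ) : ℝ) = 2 * m := by push_cast; ring
  rw [lt_div_iff₀ (by positivity), mul_comm γ, ← hcast]
  constructor
  · rintro ⟨P⟩
    exact P.mul_lt_pi hγ0 hγ1 hp hn0 hn
  · intro h
    obtain ⟨ρ, β, hρ, hβ0, hβγ, hpρ⟩ := exists_polar_of_mem_wedge hγ0 hγ1 hp
    exact ⟨.ofChord ρ β hγ0 hγ1 hρ hβ0 hβγ hn0 hn h hpρ⟩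

end
end

section
/- Let β, φ ∈ ℝ with cos(β/2) ≠ 0 and cos(φ/2) ≠ 0, and set ν = tan(β/2) and ξ₁ = tan(φ/2). Let (ξ_k)_{k ≥ 1} be a sequence of real numbers such that for every k ≥ 1: ξ_{2k−1} ≠ 0 and ξ_{2k} = 1/ξ_{2k−1}, and (1 − ν²)·ξ_{2k} − 2ν ≠ 0 and ξ_{2k+1} = (2ν·ξ_{2k} + 1 − ν²)/((1 − ν²)·ξ_{2k} − 2ν). Then for every k ≥ 1: (1 − ξ_{2k}²)/(1 + ξ_{2k}²) = −cos(φ + 2(k−1)β) and 2ξ_{2k}/(1 + ξ_{2k}²) = sin(φ + 2(k−1)β); and for every k ≥ 0: (1 − ξ_{2k+1}²)/(1 + ξ_{2k+1}²) = cos(φ + 2kβ) and 2ξ_{2k+1}/(1 + ξ_{2k+1}²) = sin(φ + 2kβ). -/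
open Real

/-!
In the tangent half-angle coordinate `ξ ↔ (cos θ, sin θ)`, the reflection in the line with normal
angle `β` (where `ν = tan (β / 2)`) acts on angles as `θ ↦ 2β - θ + π`, and the horizontal line is
the case `β = 0`. Hence `ξ₁, ξ₂, ξ₃, …` have angles `φ, π - φ, φ + 2β, π - (φ + 2β), …`.
-/

/-- For `θ ∉ π + 2πℤ` this says exactly `ξ = tan (θ / 2)`. -/
def IsTanHalfAngle (ξ θ : ℝ) : Prop :=
  (1 - ξ ^ 2) / (1 + ξ ^ 2) = cos θ ∧ 2 * ξ / (1 + ξ ^ 2) = sin θ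

noncomputable def reflectParam (ν ξ : ℝ) : ℝ :=
  (2 * ν * ξ + 1 - ν ^ 2) / ((1 - ν ^ 2) * ξ - 2 * ν)

lemma isTanHalfAngle_tan_half {θ : ℝ} (h : cos (θ / 2) ≠ 0) :
    IsTanHalfAngle (tan (θ / 2)) θ := by
  have hcos : cos θ ≠ -1 := by
    rw [← mul_div_cancel₀ θ two_ne_zero, cos_two_mul]
    intro h'
    exact h (pow_eq_zero_iff two_ne_zero |>.mp (by linarith))
  exact ⟨(cos_eq_two_mul_tan_half_div_one_sub_tan_half_sq θ hcos).symm,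
    (sin_eq_two_mul_tan_half_div_one_add_tan_half_sq θ).symm⟩

lemma isTanHalfAngle_zero_zero : IsTanHalfAngle 0 0 := by
  simp [IsTanHalfAngle]

lemma IsTanHalfAngle.reflectParam {ν β ξ θ : ℝ} (hν : IsTanHalfAngle ν β)
    (hξ : IsTanHalfAngle ξ θ) (hden : (1 - ν ^ 2) * ξ - 2 * ν ≠ 0) :
    IsTanHalfAngle (reflectParam ν ξ) (2 * β - θ + π) := by
  obtain ⟨hcβ, hsβ⟩ := hν
  obtain ⟨hcθ, hsθ⟩ := hξ
  have hcos : cos (2 * β - θ + π)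
      = -((cos β ^ 2 - sin β ^ 2) * cos θ + 2 * sin β * cos β * sin θ) := by
    rw [cos_add_pi, cos_sub, cos_two_mul', sin_two_mul]
  have hsin : sin (2 * β - θ + π)
      = -(2 * sin β * cos β * cos θ - (cos β ^ 2 - sin β ^ 2) * sin θ) := by
    rw [sin_add_pi, sin_sub, cos_two_mul', sin_two_mul]
  have hν2 : (1 : ℝ) + ν ^ 2 ≠ 0 := by positivity
  have hξ2 : (1 : ℝ) + ξ ^ 2 ≠ 0 := by positivity
  unfold IsTanHalfAngle _root_.reflectParam
  rw [hcos, hsin, ← hcβ, ← hsβ, ← hcθ, ← hsθ]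
  generalize hD : (1 - ν ^ 2) * ξ - 2 * ν = D at hden ⊢
  have hnorm : (1 : ℝ) + ((2 * ν * ξ + 1 - ν ^ 2) / D) ^ 2
      = (1 + ν ^ 2) ^ 2 * (1 + ξ ^ 2) / D ^ 2 := by
    field_simp; rw [← hD]; ring
  rw [hnorm]
  constructor <;> field_simp <;> rw [← hD] <;> ring

lemma IsTanHalfAngle.one_div {ξ θ : ℝ} (h : IsTanHalfAngle ξ θ) (hξ : ξ ≠ 0) :
    IsTanHalfAngle (1 / ξ) (π - θ) := by
  -- reflection in the horizontal line is the case `ν = β = 0`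
  have := isTanHalfAngle_zero_zero.reflectParam h (by simpa using hξ)
  simpa [_root_.reflectParam, sub_eq_neg_add] using this

/-- For a ray reflected alternately off the horizontal line and a line making
angle `β` with it (with normal direction parameter `ν = tan(β/2)`), starting
with direction parameter `ξ₁ = tan(φ/2)` and striking the horizontal line
first, the sequence of reflected direction parameters satisfies the stated
closed trigonometric formulas. -/
theorem reflected_direction_sequence (β φ : ℝ)
    (hβ : Real.cos (β / 2) ≠ 0) (hφ : Real.cos (φ / 2) ≠ 0)
    (ν : ℝ) (hν : ν = Real.tan (β / 2))
    (ξ : ℕ → ℝ) (hξ1 : ξ 1 = Real.tan (φ / 2))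
    (hodd_ne : ∀ k, 1 ≤ k → ξ (2 * k - 1) ≠ 0)
    (heven : ∀ k, 1 ≤ k → ξ (2 * k) = 1 / ξ (2 * k - 1))
    (hden : ∀ k, 1 ≤ k → (1 - ν ^ 2) * ξ (2 * k) - 2 * ν ≠ 0)
    (hodd : ∀ k, 1 ≤ k →
      ξ (2 * k + 1) = (2 * ν * ξ (2 * k) + 1 - ν ^ 2) / ((1 - ν ^ 2) * ξ (2 * k) - 2 * ν)) :
    (∀ k : ℕ, 1 ≤ k →
      (1 - ξ (2 * k) ^ 2) / (1 + ξ (2 * k) ^ 2) = -Real.cos (φ + 2 * ((k : ℝ) - 1) * β) ∧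
      2 * ξ (2 * k) / (1 + ξ (2 * k) ^ 2) = Real.sin (φ + 2 * ((k : ℝ) - 1) * β)) ∧
    (∀ k : ℕ,
      (1 - ξ (2 * k + 1) ^ 2) / (1 + ξ (2 * k + 1) ^ 2) = Real.cos (φ + 2 * (k : ℝ) * β) ∧
      2 * ξ (2 * k + 1) / (1 + ξ (2 * k + 1) ^ 2) = Real.sin (φ + 2 * (k : ℝ) * β)) := by
  have hν' : IsTanHalfAngle ν β := hν ▸ isTanHalfAngle_tan_half hβ
  have even_of_odd : ∀ k θ, IsTanHalfAngle (ξ (2 * k + 1)) θ →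
      IsTanHalfAngle (ξ (2 * (k + 1))) (π - θ) := by
    intro k θ h
    have hidx : 2 * (k + 1) - 1 = 2 * k + 1 := by omega
    rw [heven (k + 1) k.succ_pos, hidx]
    exact h.one_div (hidx ▸ hodd_ne (k + 1) k.succ_pos)
  have odd : ∀ k : ℕ, IsTanHalfAngle (ξ (2 * k + 1)) (φ + 2 * k * β) := by
    intro k
    induction k with
    | zero => simpa [hξ1] using isTanHalfAngle_tan_half hφ
    | succ k ih =>
      have h := hν'.reflectParam (even_of_odd k _ ih) (hden (k + 1) k.succ_pos)
      rw [_root_.reflectParam, ← hodd (k + 1) k.succ_pos] at h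
      rwa [show φ + 2 * ((k + 1 : ℕ) : ℝ) * β = 2 * β - (π - (φ + 2 * k * β)) + π by
        push_cast; ring]
  refine ⟨fun k hk => ?_, odd⟩
  obtain ⟨k, rfl⟩ : ∃ m, k = m + 1 := ⟨k - 1, by omega⟩
  obtain ⟨hc, hs⟩ := even_of_odd k _ (odd k)
  rw [cos_pi_sub] at hc
  rw [sin_pi_sub] at hs
  rw [show φ + 2 * (((k + 1 : ℕ) : ℝ) - 1) * β = φ + 2 * k * β by push_cast; ring]
  exact ⟨hc, hs⟩
end

section
/- For every integer m ≥ 1 and all ψ, β ∈ ℝ such that sin(ψ − jβ) ≠ 0 for every integer j with −(m−1) ≤ j ≤ m, the following identity holds: cos(ψ − β)/sin(ψ + (m−1)β) − cos ψ/sin(ψ − mβ) + Σ_{k=1}^{2m−1} [cos(mβ)·sin β/(sin(ψ − (m−k)β)·sin(ψ − (m−k+1)β))] = 2 sin(mβ). -/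
open Real Finset

lemma cot_diff_aux (x y : ℝ) (hx : Real.sin x ≠ 0) (hy : Real.sin y ≠ 0) :
    Real.sin (x - y) / (Real.sin x * Real.sin y) =
      Real.cos y / Real.sin y - Real.cos x / Real.sin x := by
  rw [Real.sin_sub]
  field_simp

/-- Trigonometric identity expressing that the total length of a closed
`2m`-bounce reflected path in a wedge, starting at `(R sin ψ, R cos ψ)`, is
`2R·sin(mβ)` in absolute value. -/
theorem even_bounce_length_identity (m : ℕ) (hm : 1 ≤ m) (ψ β : ℝ)
    (hsin : ∀ j : ℤ, -((m : ℤ) - 1) ≤ j → j ≤ (m : ℤ) → Real.sin (ψ - (j : ℝ) * β) ≠ 0) :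
    Real.cos (ψ - β) / Real.sin (ψ + ((m : ℝ) - 1) * β)
      - Real.cos ψ / Real.sin (ψ - (m : ℝ) * β)
      + ∑ k ∈ Finset.Icc 1 (2 * m - 1),
          Real.cos ((m : ℝ) * β) * Real.sin β /
            (Real.sin (ψ - ((m : ℝ) - (k : ℝ)) * β) *
              Real.sin (ψ - ((m : ℝ) - (k : ℝ) + 1) * β)) =
      2 * Real.sin ((m : ℝ) * β) := by
  -- nonvanishing facts, stated over ℝ
  have hne : ∀ i : ℕ, i ≤ 2 * m - 1 →
      Real.sin (ψ - ((m : ℝ) - (i : ℝ)) * β) ≠ 0 := by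
    intro i hi
    have h := hsin ((m : ℤ) - (i : ℤ)) (by omega) (by omega)
    have : ((((m : ℤ) - (i : ℤ)) : ℤ) : ℝ) = (m : ℝ) - (i : ℝ) := by push_cast; ring
    rwa [this] at h
  set f : ℕ → ℝ := fun i =>
    Real.cos ((m : ℝ) * β) *
      (Real.cos (ψ - ((m : ℝ) - (i : ℝ)) * β) / Real.sin (ψ - ((m : ℝ) - (i : ℝ)) * β))
    with hf
  have hsum : ∑ k ∈ Finset.Icc 1 (2 * m - 1),
      Real.cos ((m : ℝ) * β) * Real.sin β /
        (Real.sin (ψ - ((m : ℝ) - (k : ℝ)) * β) *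
          Real.sin (ψ - ((m : ℝ) - (k : ℝ) + 1) * β)) = f 0 - f (2 * m - 1) := by
    rw [← Finset.Ico_add_one_right_eq_Icc, Finset.sum_Ico_eq_sum_range]
    have hn : 2 * m - 1 + 1 - 1 = 2 * m - 1 := by omega
    rw [hn]
    rw [← Finset.sum_range_sub' f (2 * m - 1)]
    apply Finset.sum_congr rfl
    intro i hi
    simp only [Finset.mem_range] at hi
    set x := ψ - ((m : ℝ) - ((i : ℝ) + 1)) * β with hxd
    set y := ψ - ((m : ℝ) - (i : ℝ)) * β with hyd
    have hx : Real.sin x ≠ 0 := by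
      have h := hsin ((m : ℤ) - (i : ℤ) - 1) (by omega) (by omega)
      have : ((((m : ℤ) - (i : ℤ) - 1) : ℤ) : ℝ) = (m : ℝ) - ((i : ℝ) + 1) := by
        push_cast; ring
      rwa [this] at h
    have hy : Real.sin y ≠ 0 := hne i (by omega)
    have harg1 : ψ - ((m : ℝ) - ((1 + i : ℕ) : ℝ)) * β = x := by push_cast [hxd]; ring
    have harg2 : ψ - ((m : ℝ) - ((1 + i : ℕ) : ℝ) + 1) * β = y := by push_cast [hyd]; ring
    have harg3 : ψ - ((m : ℝ) - ((i + 1 : ℕ) : ℝ)) * β = x := by push_cast [hxd]; ring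
    rw [harg1, harg2]
    have hb : Real.sin β = Real.sin (x - y) := by
      congr 1
      rw [hxd, hyd]; ring
    rw [hb, mul_div_assoc, cot_diff_aux x y hx hy, hf]
    simp only [harg3]
    ring
  rw [hsum, hf]
  simp only []
  have hcast : ((2 * m - 1 : ℕ) : ℝ) = 2 * (m : ℝ) - 1 := by
    have : (2 * m - 1 : ℕ) = 2 * m - 1 := rfl
    push_cast [Nat.cast_sub (by omega : 1 ≤ 2 * m)]
    ring
  rw [hcast]
  have harg0 : ψ - ((m : ℝ) - ((0 : ℕ) : ℝ)) * β = ψ - (m : ℝ) * β := by push_cast; ring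
  have hargn : ψ - ((m : ℝ) - (2 * (m : ℝ) - 1)) * β = ψ + ((m : ℝ) - 1) * β := by ring
  rw [harg0, hargn]
  have h0 : Real.sin (ψ - (m : ℝ) * β) ≠ 0 := by
    have h := hsin (m : ℤ) (by omega) le_rfl
    simpa using h
  have h1 : Real.sin (ψ + ((m : ℝ) - 1) * β) ≠ 0 := by
    have h := hsin (-((m : ℤ) - 1)) le_rfl (by omega)
    have : ψ - ((-((m : ℤ) - 1) : ℤ) : ℝ) * β = ψ + ((m : ℝ) - 1) * β := by
      push_cast; ring
    rwa [this] at h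
  -- key trig identities
  have e0 : Real.cos ((m : ℝ) * β) * Real.cos (ψ - (m : ℝ) * β) - Real.cos ψ =
      Real.sin ((m : ℝ) * β) * Real.sin (ψ - (m : ℝ) * β) := by
    have hc := Real.cos_add (ψ - (m : ℝ) * β) ((m : ℝ) * β)
    rw [show ψ - (m : ℝ) * β + (m : ℝ) * β = ψ by ring] at hc
    linarith [hc]
  have e1 : Real.cos (ψ - β) - Real.cos ((m : ℝ) * β) * Real.cos (ψ + ((m : ℝ) - 1) * β) =
      Real.sin ((m : ℝ) * β) * Real.sin (ψ + ((m : ℝ) - 1) * β) := by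
    have hc := Real.cos_sub (ψ + ((m : ℝ) - 1) * β) ((m : ℝ) * β)
    rw [show ψ + ((m : ℝ) - 1) * β - (m : ℝ) * β = ψ - β by ring] at hc
    linarith [hc]
  have key : Real.cos (ψ - β) / Real.sin (ψ + ((m : ℝ) - 1) * β)
      - Real.cos ψ / Real.sin (ψ - (m : ℝ) * β)
      + (Real.cos ((m : ℝ) * β) *
          (Real.cos (ψ - (m : ℝ) * β) / Real.sin (ψ - (m : ℝ) * β))
        - Real.cos ((m : ℝ) * β) *
          (Real.cos (ψ + ((m : ℝ) - 1) * β) / Real.sin (ψ + ((m : ℝ) - 1) * β))) =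
      (Real.cos (ψ - β) - Real.cos ((m : ℝ) * β) * Real.cos (ψ + ((m : ℝ) - 1) * β)) /
        Real.sin (ψ + ((m : ℝ) - 1) * β)
      + (Real.cos ((m : ℝ) * β) * Real.cos (ψ - (m : ℝ) * β) - Real.cos ψ) /
        Real.sin (ψ - (m : ℝ) * β) := by
    field_simp
    ring
  rw [key, e0, e1, mul_div_assoc, mul_div_assoc, div_self h1, div_self h0]
  ring
end

section
/- For every integer m ≥ 1 and all ψ, β ∈ ℝ such that cos(jβ) ≠ 0 for every integer j with 0 ≤ j ≤ m−1, the following identity holds: cos ψ/cos((m−1)β) − Σ_{k=1}^{m−1} [sin(ψ + (m−1)β)·sin β/(cos((m−k)β)·cos((m−k−1)β))] = cos(ψ + (m−1)β). -/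
open Real Finset

lemma tan_sub_tan' (a b : ℝ) (ha : Real.cos a ≠ 0) (hb : Real.cos b ≠ 0) :
    Real.tan a - Real.tan b = Real.sin (a - b) / (Real.cos a * Real.cos b) := by
  rw [Real.tan_eq_sin_div_cos, Real.tan_eq_sin_div_cos, Real.sin_sub]
  field_simp

/-- Trigonometric identity expressing that the total length of a closed
`(2m−1)`-bounce reflected path in a wedge (which retraces itself), starting at
`(R sin ψ, R cos ψ)`, is `2R·|cos(ψ + (m−1)β)|`.  (The paper states this
identity with right-hand side `2cos(ψ + (m−1)β)`, off by a factor of `2`.) -/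
theorem odd_bounce_length_identity (m : ℕ) (hm : 1 ≤ m) (ψ β : ℝ)
    (hcos : ∀ j : ℕ, j ≤ m - 1 → Real.cos ((j : ℝ) * β) ≠ 0) :
    Real.cos ψ / Real.cos (((m : ℝ) - 1) * β)
      - ∑ k ∈ Finset.Icc 1 (m - 1),
          Real.sin (ψ + ((m : ℝ) - 1) * β) * Real.sin β /
            (Real.cos (((m : ℝ) - (k : ℝ)) * β) * Real.cos (((m : ℝ) - (k : ℝ) - 1) * β)) =
      Real.cos (ψ + ((m : ℝ) - 1) * β) := by
  obtain ⟨n, rfl⟩ : ∃ n, m = n + 1 := ⟨m - 1, (Nat.succ_pred_eq_of_pos hm).symm⟩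
  simp only [Nat.add_sub_cancel] at hcos ⊢
  have hcast : ((n : ℝ) + 1) - 1 = (n : ℝ) := by ring
  push_cast
  rw [hcast]
  have hsum : ∑ k ∈ Finset.Icc 1 n,
      Real.sin (ψ + (n : ℝ) * β) * Real.sin β /
        (Real.cos (((n : ℝ) + 1 - (k : ℝ)) * β) * Real.cos (((n : ℝ) + 1 - (k : ℝ) - 1) * β))
      = Real.sin (ψ + (n : ℝ) * β) * Real.tan ((n : ℝ) * β) := by
    have h1 : ∑ k ∈ Finset.Icc 1 n,
        Real.sin (ψ + (n : ℝ) * β) * Real.sin β /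
          (Real.cos (((n : ℝ) + 1 - (k : ℝ)) * β) * Real.cos (((n : ℝ) + 1 - (k : ℝ) - 1) * β))
        = ∑ i ∈ Finset.range n,
          (Real.sin (ψ + (n : ℝ) * β) *
            (Real.tan (((i : ℝ) + 1) * β) - Real.tan ((i : ℝ) * β))) := by
      refine Finset.sum_nbij' (fun k => n - k) (fun i => n - i) ?_ ?_ ?_ ?_ ?_
      · intro k hk; rw [Finset.mem_Icc] at hk; rw [Finset.mem_range]; omega
      · intro i hi; rw [Finset.mem_range] at hi; rw [Finset.mem_Icc]; omega
      · intro k hk; rw [Finset.mem_Icc] at hk; omega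
      · intro i hi; rw [Finset.mem_range] at hi; omega
      · intro k hk
        rw [Finset.mem_Icc] at hk
        have hc : ((n - k : ℕ) : ℝ) = (n : ℝ) - k := by
          have h : n - k + k = n := by omega
          have := congrArg (fun x : ℕ => (x : ℝ)) h
          push_cast at this; linarith
        have hca : Real.cos (((n : ℝ) - k + 1) * β) ≠ 0 := by
          have h := hcos (n - k + 1) (by omega)
          have hc2 : ((n - k + 1 : ℕ) : ℝ) = (n : ℝ) - k + 1 := by push_cast [hc]; ring
          rwa [hc2] at h
        have hcb : Real.cos (((n : ℝ) - k) * β) ≠ 0 := by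
          have h := hcos (n - k) (by omega)
          rwa [hc] at h
        rw [hc, tan_sub_tan' _ _ hca hcb]
        rw [mul_div_assoc]
        congr 2
        · congr 1; ring
        · congr 2 <;> ring
    rw [h1, ← Finset.mul_sum]
    congr 1
    have h2 : ∀ i : ℕ, Real.tan (((i : ℝ) + 1) * β) - Real.tan ((i : ℝ) * β)
        = (fun j : ℕ => Real.tan ((j : ℝ) * β)) (i + 1) - (fun j : ℕ => Real.tan ((j : ℝ) * β)) i := by
      intro i; push_cast; ring_nf
    calc ∑ i ∈ Finset.range n, (Real.tan (((i : ℝ) + 1) * β) - Real.tan ((i : ℝ) * β))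
        = ∑ i ∈ Finset.range n, ((fun j : ℕ => Real.tan ((j : ℝ) * β)) (i + 1)
            - (fun j : ℕ => Real.tan ((j : ℝ) * β)) i) := by
          exact Finset.sum_congr rfl fun i _ => h2 i
      _ = Real.tan ((n : ℝ) * β) - Real.tan ((0 : ℕ) * β) := Finset.sum_range_sub (fun j : ℕ => Real.tan ((j : ℝ) * β)) n
      _ = Real.tan ((n : ℝ) * β) := by simp
  rw [hsum]
  have hn : Real.cos ((n : ℝ) * β) ≠ 0 := hcos n le_rfl
  rw [Real.tan_eq_sin_div_cos]
  field_simp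
  have := Real.cos_sub (ψ + (n : ℝ) * β) ((n : ℝ) * β)
  simp only [add_sub_cancel_right] at this
  linarith [this]
end

section
/- Let m ≥ 1 be an integer, β, ψ₀ ∈ ℝ, and R₀, R₁ > 0. Assume R₀·sin(ψ₀ − β) = R₁·sin(ψ₀ + (m−1)β) and that cos β, cos((m−1)β), sin(mβ), sin(ψ₀ − β), and sin(ψ₀ + (m−1)β) are all nonzero. Then cos ψ₀ · (1/(R₀²·cos β·sin(ψ₀ − β)) − 1/(R₁²·cos((m−1)β)·sin(ψ₀ + (m−1)β))) = −(R₀·cos β − R₁·cos((m−1)β))²/(R₀²·R₁²·cos β·cos((m−1)β)·sin(mβ)). -/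
open Real

/-- Evaluation of the closed-form Casimir energy integral at the boundary angle
`ψ₀` where the two bounding circles of the domain of closed `2m`-bounce paths
intersect, yielding the boundary-case energy term of Main Theorem 2. -/
theorem boundary_angle_energy (m : ℕ) (hm : 1 ≤ m) (β ψ₀ R₀ R₁ : ℝ)
    (hR₀ : 0 < R₀) (hR₁ : 0 < R₁)
    (hψ₀ : R₀ * Real.sin (ψ₀ - β) = R₁ * Real.sin (ψ₀ + ((m : ℝ) - 1) * β))
    (h1 : Real.cos β ≠ 0) (h2 : Real.cos (((m : ℝ) - 1) * β) ≠ 0)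
    (h3 : Real.sin ((m : ℝ) * β) ≠ 0) (h4 : Real.sin (ψ₀ - β) ≠ 0)
    (h5 : Real.sin (ψ₀ + ((m : ℝ) - 1) * β) ≠ 0) :
    Real.cos ψ₀ *
        (1 / (R₀ ^ 2 * Real.cos β * Real.sin (ψ₀ - β))
          - 1 / (R₁ ^ 2 * Real.cos (((m : ℝ) - 1) * β) *
              Real.sin (ψ₀ + ((m : ℝ) - 1) * β))) =
      -(R₀ * Real.cos β - R₁ * Real.cos (((m : ℝ) - 1) * β)) ^ 2 /
        (R₀ ^ 2 * R₁ ^ 2 * Real.cos β * Real.cos (((m : ℝ) - 1) * β) *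
          Real.sin ((m : ℝ) * β)) := by
  have hmb : (m : ℝ) * β = β + ((m : ℝ) - 1) * β := by ring
  have e1 : Real.sin (ψ₀ - β) * Real.cos (((m : ℝ) - 1) * β)
      - Real.sin (ψ₀ + ((m : ℝ) - 1) * β) * Real.cos β
      = -Real.cos ψ₀ * Real.sin ((m : ℝ) * β) := by
    rw [hmb, Real.sin_add, Real.sin_sub, Real.sin_add]
    ring
  have e2 : (R₀ * Real.cos β - R₁ * Real.cos (((m : ℝ) - 1) * β)) * Real.sin (ψ₀ - β)
      = R₁ * Real.cos ψ₀ * Real.sin ((m : ℝ) * β) := by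
    linear_combination Real.cos β * hψ₀ - R₁ * e1
  have ha : R₀ ^ 2 * Real.cos β * Real.sin (ψ₀ - β) ≠ 0 := by positivity
  have hb : R₁ ^ 2 * Real.cos (((m : ℝ) - 1) * β) *
      Real.sin (ψ₀ + ((m : ℝ) - 1) * β) ≠ 0 := by positivity
  have hd : R₀ ^ 2 * R₁ ^ 2 * Real.cos β * Real.cos (((m : ℝ) - 1) * β) *
      Real.sin ((m : ℝ) * β) ≠ 0 := by positivity
  rw [div_sub_div _ _ ha hb, mul_div_assoc', div_eq_div_iff (mul_ne_zero ha hb) hd]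
  linear_combination (R₀ ^ 2 * R₁ ^ 2 * Real.cos β * Real.cos (((m : ℝ) - 1) * β) *
      (-(Real.cos ψ₀ * Real.sin ((m : ℝ) * β) * Real.cos β * R₀))) * hψ₀ +
    (R₀ ^ 2 * R₁ ^ 2 * Real.cos β * Real.cos (((m : ℝ) - 1) * β) *
      (-(Real.sin (ψ₀ + ((m : ℝ) - 1) * β) *
        (R₁ * Real.cos (((m : ℝ) - 1) * β) - R₀ * Real.cos β)))) * e2
end

section
/- For all real numbers L and b and every integer m ≥ 1, the function β ↦ sin³β · ((L + b·sin β)²·cos((m−1)β)·cos(mβ) − L²·cos β)/sin⁴(mβ) tends to −2bL/m⁴ as β tends to π (the limit taken along β ≠ π; note that sin(mβ) ≠ 0 for all β ≠ π sufficiently close to π). -/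
open Real Filter Topology

/-!
Both `sin β` and `sin (mβ)` vanish at `β = π`, and so does the bracket
`wedgeNumerator L b m β`, since `cos ((m-1)π) cos (mπ) = -1 = cos π`. Writing the expression
as `(sin β / sin (mβ))³ · (wedgeNumerator L b m β / sin (mβ))`, each quotient tends to the
quotient of the derivatives at `π`, namely `-1 / (m (-1)^m)` and `2bL / (m (-1)^m)`.
-/

theorem tendsto_div_nhdsNE_of_hasDerivAt {𝕜 : Type*} [NontriviallyNormedField 𝕜]
    {f g : 𝕜 → 𝕜} {f' g' a : 𝕜} (hf : HasDerivAt f f' a) (hg : HasDerivAt g g' a)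
    (hfa : f a = 0) (hga : g a = 0) (hg' : g' ≠ 0) :
    Tendsto (fun x => f x / g x) (𝓝[≠] a) (𝓝 (f' / g')) := by
  refine ((hasDerivAt_iff_tendsto_slope.mp hf).div
    (hasDerivAt_iff_tendsto_slope.mp hg) hg').congr' ?_
  filter_upwards [self_mem_nhdsWithin] with x hx
  have hxa : x - a ≠ 0 := sub_ne_zero.mpr hx
  rw [Pi.div_apply, slope_def_field, slope_def_field, hfa, hga, sub_zero, sub_zero,
    div_div_div_cancel_right₀ hxa]

theorem hasDerivAt_sin_nat_mul_pi (m : ℕ) :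
    HasDerivAt (fun β => sin (m * β)) (m * (-1) ^ m) π :=
  ((hasDerivAt_id π).const_mul (m : ℝ)).sin.congr_deriv (by
    rw [id, mul_one, cos_nat_mul_pi, mul_comm])

theorem hasDerivAt_cos_mul_of_sin_eq_zero {k x : ℝ} (h : sin (k * x) = 0) :
    HasDerivAt (fun β => cos (k * β)) 0 x := by
  simpa [h] using ((hasDerivAt_id x).const_mul k).cos

theorem sin_nat_sub_one_mul_pi (m : ℕ) : sin ((m - 1) * π) = 0 := by
  rw [sub_one_mul, sin_sub_pi, sin_nat_mul_pi, neg_zero]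

theorem cos_nat_sub_one_mul_pi (m : ℕ) : cos ((m - 1) * π) = -(-1) ^ m := by
  rw [sub_one_mul, cos_sub_pi, cos_nat_mul_pi]

theorem sq_neg_one_pow {R : Type*} [Monoid R] [HasDistribNeg R] (m : ℕ) :
    ((-1 : R) ^ m) ^ 2 = 1 := by
  rw [pow_right_comm, neg_one_sq, one_pow]

noncomputable def wedgeNumerator (L b : ℝ) (m : ℕ) (β : ℝ) : ℝ :=
  (L + b * sin β) ^ 2 * cos ((m - 1) * β) * cos (m * β) - L ^ 2 * cos β

theorem wedgeNumerator_pi (L b : ℝ) (m : ℕ) : wedgeNumerator L b m π = 0 := by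
  rw [wedgeNumerator, sin_pi, cos_pi, cos_nat_sub_one_mul_pi, cos_nat_mul_pi]
  linear_combination (-L ^ 2) * (sq_neg_one_pow (R := ℝ) m)

theorem hasDerivAt_wedgeNumerator_pi (L b : ℝ) (m : ℕ) :
    HasDerivAt (wedgeNumerator L b m) (2 * b * L) π := by
  have hsq : HasDerivAt (fun β => (L + b * sin β) ^ 2) (-(2 * b * L)) π :=
    ((((hasDerivAt_sin π).const_mul b).const_add L).pow 2).congr_deriv (by
      rw [sin_pi, cos_pi]
      ring)
  have hcos₁ := hasDerivAt_cos_mul_of_sin_eq_zero (sin_nat_sub_one_mul_pi m)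
  have hcos₂ := hasDerivAt_cos_mul_of_sin_eq_zero (sin_nat_mul_pi m)
  refine (((hsq.mul hcos₁).mul hcos₂).sub
    ((hasDerivAt_cos π).const_mul (L ^ 2))).congr_deriv ?_
  rw [cos_nat_sub_one_mul_pi, cos_nat_mul_pi, sin_pi]
  linear_combination (2 * b * L) * (sq_neg_one_pow (R := ℝ) m)

/-- The key limit in recovering Casimir's parallel-plate energy from the wedge
energy: as `β → π` (along `β ≠ π`),
`sin³β·((L + b·sin β)²·cos((m−1)β)·cos(mβ) − L²·cos β)/sin⁴(mβ) → −2bL/m⁴`. -/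
theorem parallel_plate_key_limit (L b : ℝ) (m : ℕ) (hm : 1 ≤ m) :
    Filter.Tendsto
      (fun β : ℝ =>
        Real.sin β ^ 3 *
            ((L + b * Real.sin β) ^ 2 * Real.cos (((m : ℝ) - 1) * β) *
                Real.cos ((m : ℝ) * β) -
              L ^ 2 * Real.cos β) /
          Real.sin ((m : ℝ) * β) ^ 4)
      (𝓝[≠] π) (𝓝 (-(2 * b * L) / (m : ℝ) ^ 4)) := by
  have hm₀ : (m : ℝ) ≠ 0 := Nat.cast_ne_zero.mpr (by omega)
  have hderiv : (m : ℝ) * (-1) ^ m ≠ 0 := mul_ne_zero hm₀ (pow_ne_zero _ (by norm_num))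
  have hsin := tendsto_div_nhdsNE_of_hasDerivAt (hasDerivAt_sin π)
    (hasDerivAt_sin_nat_mul_pi m) sin_pi (sin_nat_mul_pi m) hderiv
  have hnum := tendsto_div_nhdsNE_of_hasDerivAt (hasDerivAt_wedgeNumerator_pi L b m)
    (hasDerivAt_sin_nat_mul_pi m) (wedgeNumerator_pi L b m) (sin_nat_mul_pi m) hderiv
  have hlim : (cos π / (m * (-1) ^ m)) ^ 3 * (2 * b * L / (m * (-1) ^ m)) =
      -(2 * b * L) / (m : ℝ) ^ 4 := by
    rw [cos_pi, div_pow, div_mul_div_comm, ← pow_succ, mul_pow, pow_right_comm]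
    norm_num
  rw [← hlim]
  refine ((hsin.pow 3).mul hnum).congr fun β => ?_
  rw [div_pow, div_mul_div_comm, ← pow_succ]
  rfl
end

section
/- Let L, b > 0 and let m ≥ 1 be an integer. Define, for β ∈ ℝ with sin(mβ) ≠ 0, E(β) = (cos²(mβ)·sin³β/(64π²·sin⁴(mβ))) · (1/(L²·cos β) − 1/((L + b·sin β)²·cos((m−1)β)·cos(mβ))). Then E(β) tends to −b/(32π²·L³·m⁴) as β tends to π (the limit taken along β ≠ π). -/
/-!
Write `E(β)` as `cos²(mβ)/(64π²) · (sin β/(β-π))³ · (F(β)/(β-π)) / (sin(mβ)/(β-π))⁴`,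
where `F` is the bracket. Since `sin`, `sin(m·)` and `F` all vanish at `π`, each difference
quotient tends to a derivative at `π`: `cos π = -1`, `m cos(mπ) = ±m` and `F'(π) = 2b/L³`.
With `cos²(mπ) = 1` the limit is `(1/(64π²)) · (-1) · (2b/L³) / m⁴`.
-/

open Real Filter Topology

theorem tendsto_div_sub_nhdsNE_of_hasDerivAt {𝕜 : Type*} [NontriviallyNormedField 𝕜]
    {f : 𝕜 → 𝕜} {f' a : 𝕜} (hf : HasDerivAt f f' a) (ha : f a = 0) :
    Tendsto (fun x => f x / (x - a)) (𝓝[≠] a) (𝓝 f') := by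
  refine hf.tendsto_slope.congr fun x => ?_
  rw [slope_def_field, ha, sub_zero]

theorem cos_nat_mul_pi_sq (m : ℕ) : cos (m * π) ^ 2 = 1 := by
  rw [cos_nat_mul_pi, ← pow_mul, mul_comm, pow_mul]; norm_num

theorem cos_sub_one_mul_pi_mul_cos_mul_pi (m : ℕ) :
    cos (((m : ℝ) - 1) * π) * cos (m * π) = -1 := by
  rw [sub_one_mul, cos_sub_pi, neg_mul, ← sq, cos_nat_mul_pi_sq]

/-- Also true for `g = 0`, where both sides are `0` by `x / 0 = 0`; so no nonvanishing of
`sin (m * β)` near `π` is needed. -/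
theorem pow_three_mul_div_pow_four_eq {K : Type*} [Field K] (s g F : K) {h : K} (hh : h ≠ 0) :
    s ^ 3 * F / g ^ 4 = (s / h) ^ 3 * (F / h) / (g / h) ^ 4 := by
  rcases eq_or_ne g 0 with rfl | hg
  · simp
  · field_simp

noncomputable def energyBracket (L b : ℝ) (m : ℕ) (β : ℝ) : ℝ :=
  1 / (L ^ 2 * cos β) - 1 / ((L + b * sin β) ^ 2 * cos (((m : ℝ) - 1) * β) * cos ((m : ℝ) * β))

theorem energyBracket_pi (L b : ℝ) (m : ℕ) : energyBracket L b m π = 0 := by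
  simp [energyBracket, mul_assoc, cos_sub_one_mul_pi_mul_cos_mul_pi]

theorem hasDerivAt_energyBracket_pi (L b : ℝ) (hL : L ≠ 0) (m : ℕ) :
    HasDerivAt (energyBracket L b m) (2 * b / L ^ 3) π := by
  have hcos := cos_sub_one_mul_pi_mul_cos_mul_pi m
  have hcos_mul (c : ℝ) : HasDerivAt (fun β => cos (c * β)) (-sin (c * π) * c) π := by
    simpa using ((hasDerivAt_id π).const_mul c).cos
  have hden : HasDerivAt
      (fun β => (L + b * sin β) ^ 2 * cos (((m : ℝ) - 1) * β) * cos ((m : ℝ) * β))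
      (2 * L * b) π := by
    have hbase : HasDerivAt (fun β => L + b * sin β) (b * cos π) π :=
      ((hasDerivAt_sin π).const_mul b).const_add L
    refine (((hbase.fun_pow 2).fun_mul (hcos_mul _)).fun_mul (hcos_mul _)).congr_deriv ?_
    have hsin : sin (((m : ℝ) - 1) * π) = 0 := by
      rw [sub_one_mul, sin_sub_pi, sin_nat_mul_pi, neg_zero]
    simp only [sin_pi, cos_pi, sin_nat_mul_pi, hsin]
    linear_combination (-2 * L * b) * hcos
  refine (((hasDerivAt_const π 1).fun_div ((hasDerivAt_cos π).const_mul (L ^ 2)) ?_).fun_sub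
    ((hasDerivAt_const π 1).fun_div hden ?_)).congr_deriv ?_
  · simp [hL]
  · simp [mul_assoc, hcos, hL]
  · simp only [sin_pi, cos_pi, mul_zero, add_zero, mul_assoc, hcos]
    field_simp
    ring

theorem even_bounce_energy_limit_general (L b : ℝ) (hL : 0 < L)
    (m : ℕ) (hm : 1 ≤ m) :
    Filter.Tendsto
      (fun β : ℝ =>
        (Real.cos ((m : ℝ) * β) ^ 2 * Real.sin β ^ 3 /
            (64 * π ^ 2 * Real.sin ((m : ℝ) * β) ^ 4)) *
          (1 / (L ^ 2 * Real.cos β) -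
            1 / ((L + b * Real.sin β) ^ 2 * Real.cos (((m : ℝ) - 1) * β) *
              Real.cos ((m : ℝ) * β))))
      (𝓝[≠] π) (𝓝 (-b / (32 * π ^ 2 * L ^ 3 * (m : ℝ) ^ 4))) := by
  have hsin : Tendsto (fun β => sin β / (β - π)) (𝓝[≠] π) (𝓝 (-1)) := by
    simpa using tendsto_div_sub_nhdsNE_of_hasDerivAt (hasDerivAt_sin π) sin_pi
  have hsin_mul : Tendsto (fun β => sin (m * β) / (β - π)) (𝓝[≠] π)
      (𝓝 (cos (m * π) * m)) := by
    simpa using tendsto_div_sub_nhdsNE_of_hasDerivAt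
      ((hasDerivAt_id π).const_mul (m : ℝ)).sin (by simp)
  have hbracket := tendsto_div_sub_nhdsNE_of_hasDerivAt
    (hasDerivAt_energyBracket_pi L b hL.ne' m) (energyBracket_pi L b m)
  have hcos_sq : Tendsto (fun β => cos (m * β) ^ 2 / (64 * π ^ 2)) (𝓝[≠] π)
      (𝓝 (1 / (64 * π ^ 2))) := by
    rw [← cos_nat_mul_pi_sq m]
    exact ((continuous_cos.comp (continuous_const_mul _)).pow 2).div_const _ |>.tendsto π
      |>.mono_left nhdsWithin_le_nhds
  have hcos_ne : cos (m * π) ≠ 0 := by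
    intro h; simpa [h] using cos_nat_mul_pi_sq m
  have hm0 : (m : ℝ) ≠ 0 := Nat.cast_ne_zero.2 (by omega)
  have hlim := hcos_sq.mul (((hsin.pow 3).mul hbracket).div (hsin_mul.pow 4)
    (pow_ne_zero 4 (mul_ne_zero hcos_ne hm0)))
  convert hlim.congr' ?_ using 2
  · rw [mul_pow, show cos (m * π) ^ 4 = (cos (m * π) ^ 2) ^ 2 by ring, cos_nat_mul_pi_sq]
    field_simp
    ring
  · filter_upwards [self_mem_nhdsWithin] with β hβ
    rw [Pi.div_apply, ← pow_three_mul_div_pow_four_eq _ _ _ (sub_ne_zero.2 hβ), energyBracket]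
    ring

/-- The closed `2m`-bounce contribution to the optical-approximation Casimir
energy between a finite plate of length `b` at minimum separation `L` above an
infinite plane tends to `−b/(32π²L³m⁴)` in the parallel-plate limit `β → π`. -/
theorem even_bounce_energy_limit (L b : ℝ) (hL : 0 < L) (hb : 0 < b)
    (m : ℕ) (hm : 1 ≤ m) :
    Filter.Tendsto
      (fun β : ℝ =>
        (Real.cos ((m : ℝ) * β) ^ 2 * Real.sin β ^ 3 /
            (64 * π ^ 2 * Real.sin ((m : ℝ) * β) ^ 4)) *
          (1 / (L ^ 2 * Real.cos β) -
            1 / ((L + b * Real.sin β) ^ 2 * Real.cos (((m : ℝ) - 1) * β) *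
              Real.cos ((m : ℝ) * β))))
      (𝓝[≠] π) (𝓝 (-b / (32 * π ^ 2 * L ^ 3 * (m : ℝ) ^ 4))) :=
  even_bounce_energy_limit_general L b hL m hm
end
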